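/- arXiv:2001.08932 — 3 statements merged into one kernel-verified Lean document; each statement's English description precedes it below -/
import Mathlib

section
/- For any finite group G, the independence number of the enhanced power graph of G equals the number of maximal cyclic subgroups of G. -/
/-- The enhanced power graph of a group `G`: distinct `x, y` are adjacent iff they lie in a
common cyclic subgroup of `G`. -/
def enhancedPowerGraph (G : Type*) [Group G] : SimpleGraph G where
  Adj x y := x ≠ y ∧ ∃ z : G, x ∈ Subgroup.zpowers z ∧ y ∈ Subgroup.zpowers z
  symm := by
    constructor
    rintro x y ⟨hxy, z, hx, hy⟩
    exact ⟨hxy.symm, z, hy, hx⟩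
  loopless := by
    constructor
    rintro x ⟨hx, -⟩
    exact hx rfl

/-- The minimum degree of a finite graph. -/
noncomputable def minDeg {V : Type*} [Fintype V] (g : SimpleGraph V) : ℕ :=
  sInf {k | ∃ v : V, (g.neighborSet v).ncard = k}

/-- A set of vertices is independent if no two of its members are adjacent. -/
def IsIndepSet' {V : Type*} (g : SimpleGraph V) (s : Set V) : Prop :=
  s.Pairwise fun x y => ¬ g.Adj x y

/-- The independence number. -/
noncomputable def indepNum {V : Type*} (g : SimpleGraph V) : ℕ :=
  sSup {k | ∃ s : Set V, IsIndepSet' g s ∧ s.ncard = k}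

/-- A matching: a set of edges of `g`, no two of which share a vertex. -/
def IsMatching' {V : Type*} (g : SimpleGraph V) (M : Set (Sym2 V)) : Prop :=
  M ⊆ g.edgeSet ∧ M.Pairwise fun e f => ∀ v : V, v ∈ e → v ∉ f

/-- The matching number. -/
noncomputable def matchingNum {V : Type*} (g : SimpleGraph V) : ℕ :=
  sSup {k | ∃ M : Set (Sym2 V), IsMatching' g M ∧ M.ncard = k}

/-- An edge cover: a set of edges such that every vertex is incident to some edge of it. -/
def IsEdgeCover {V : Type*} (g : SimpleGraph V) (E : Set (Sym2 V)) : Prop :=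
  E ⊆ g.edgeSet ∧ ∀ v : V, ∃ e ∈ E, v ∈ e

/-- The edge covering number. -/
noncomputable def edgeCoverNum {V : Type*} (g : SimpleGraph V) : ℕ :=
  sInf {k | ∃ E : Set (Sym2 V), IsEdgeCover g E ∧ E.ncard = k}

/-- A vertex cover: a set of vertices containing an endpoint of every edge. -/
def IsVertexCover {V : Type*} (g : SimpleGraph V) (s : Set V) : Prop :=
  ∀ ⦃x y : V⦄, g.Adj x y → x ∈ s ∨ y ∈ s

/-- The vertex covering number. -/
noncomputable def vertexCoverNum {V : Type*} (g : SimpleGraph V) : ℕ :=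
  sInf {k | ∃ s : Set V, IsVertexCover g s ∧ s.ncard = k}

/-- The edge connectivity: the least size of a set of edges whose deletion disconnects. -/
noncomputable def edgeConnectivity {V : Type*} (g : SimpleGraph V) : ℕ :=
  sInf {k | ∃ S : Set (Sym2 V), S ⊆ g.edgeSet ∧ ¬ (g.deleteEdges S).Connected ∧ S.ncard = k}

/-- The strong metric dimension. -/
noncomputable def sdim {V : Type*} (g : SimpleGraph V) : ℕ :=
  sInf {k | ∃ U : Set V,
    (∀ u v : V, u ≠ v → ∃ z ∈ U,
      g.dist z u = g.dist z v + g.dist v u ∨ g.dist z v = g.dist z u + g.dist u v) ∧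
    U.ncard = k}

/-- The clique number. -/
noncomputable def cliqueNum' {V : Type*} (g : SimpleGraph V) : ℕ :=
  sSup {k | ∃ s : Finset V, g.IsNClique k s}

/-- A graph is perfect if every induced subgraph has chromatic number equal to clique number. -/
def IsPerfect {V : Type*} (g : SimpleGraph V) : Prop :=
  ∀ s : Set V, (g.induce s).chromaticNumber = (cliqueNum' (g.induce s) : ℕ∞)

/-- `H` is a maximal cyclic subgroup of `G`. -/
def IsMaximalCyclic {G : Type*} [Group G] (H : Subgroup G) : Prop :=
  (∃ g : G, H = Subgroup.zpowers g) ∧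
    ∀ K : Subgroup G, (∃ g : G, K = Subgroup.zpowers g) → H ≤ K → H = K

/-!
Every element of a finite group lies in some maximal cyclic subgroup, and two elements of a
common cyclic subgroup are equal or adjacent, so an independent set meets each maximal cyclic
subgroup at most once; choosing a maximal cyclic subgroup through each of its elements is thus
injective. Conversely, if generators of two maximal cyclic subgroups lie in a common cyclic
subgroup, maximality forces both subgroups to equal it, so one generator per maximal cyclic
subgroup is an independent set of the same size.
-/

namespace IsMaximalCyclic

variable {G : Type*} [Group G]

theorem eq_zpowers_of_le {H : Subgroup G} (hH : IsMaximalCyclic H) {z : G}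
    (hle : H ≤ Subgroup.zpowers z) : H = Subgroup.zpowers z :=
  hH.2 _ ⟨z, rfl⟩ hle

theorem zpowers_eq_of_adj {g h : G} (hg : IsMaximalCyclic (Subgroup.zpowers g))
    (hh : IsMaximalCyclic (Subgroup.zpowers h)) (hadj : (enhancedPowerGraph G).Adj g h) :
    Subgroup.zpowers g = Subgroup.zpowers h := by
  obtain ⟨-, z, hgz, hhz⟩ := hadj
  rw [hg.eq_zpowers_of_le (Subgroup.zpowers_le.mpr hgz),
    hh.eq_zpowers_of_le (Subgroup.zpowers_le.mpr hhz)]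

end IsMaximalCyclic

section

variable {G : Type*} [Group G]

theorem exists_isMaximalCyclic_mem [Finite G] (x : G) :
    ∃ H : Subgroup G, IsMaximalCyclic H ∧ x ∈ H := by
  let S : Set (Subgroup G) := {K | (∃ g : G, K = Subgroup.zpowers g) ∧ x ∈ K}
  obtain ⟨H, ⟨hHcyc, hxH⟩, hHmax⟩ :=
    S.toFinite.exists_maximal ⟨Subgroup.zpowers x, ⟨x, rfl⟩, Subgroup.mem_zpowers x⟩
  exact ⟨H, ⟨hHcyc, fun K hK hHK => le_antisymm hHK (hHmax ⟨hK, hHK hxH⟩ hHK)⟩, hxH⟩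

theorem ncard_le_ncard_isMaximalCyclic_of_isIndepSet' [Finite G] {s : Set G}
    (hs : IsIndepSet' (enhancedPowerGraph G) s) :
    s.ncard ≤ {H : Subgroup G | IsMaximalCyclic H}.ncard := by
  choose f hfmax hmemf using exists_isMaximalCyclic_mem (G := G)
  refine Set.ncard_le_ncard_of_injOn f (fun x _ => hfmax x) ?_ (Set.toFinite _)
  intro x hx y hy hfxy
  by_contra hxy
  obtain ⟨z, hz⟩ := (hfmax x).1
  exact hs hx hy hxy ⟨hxy, z, hz ▸ hmemf x, hz ▸ hfxy ▸ hmemf y⟩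

theorem exists_isIndepSet'_ncard_eq_ncard_isMaximalCyclic :
    ∃ s : Set G, IsIndepSet' (enhancedPowerGraph G) s ∧
      s.ncard = {H : Subgroup G | IsMaximalCyclic H}.ncard := by
  choose gen hgen using fun H : {H : Subgroup G // IsMaximalCyclic H} => H.2.1
  have hgen_inj : Function.Injective gen := fun H K hHK =>
    Subtype.ext (by rw [hgen H, hgen K, hHK])
  refine ⟨Set.range gen, ?_, ?_⟩
  · rintro _ ⟨H, rfl⟩ _ ⟨K, rfl⟩ hne hadj
    have hH : IsMaximalCyclic (Subgroup.zpowers (gen H)) := hgen H ▸ H.2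
    have hK : IsMaximalCyclic (Subgroup.zpowers (gen K)) := hgen K ▸ K.2
    exact hne (congrArg gen (Subtype.ext (by rw [hgen H, hgen K, hH.zpowers_eq_of_adj hK hadj])))
  · rw [Set.ncard_range_of_injective hgen_inj]
    exact Nat.card_coe_set_eq _

end

/-- For any finite group `G`, the independence number of the enhanced power
graph of `G` equals the number of maximal cyclic subgroups of `G`. -/
theorem stmt_2 {G : Type*} [Group G] [Fintype G] :
    indepNum (enhancedPowerGraph G) = {H : Subgroup G | IsMaximalCyclic H}.ncard := by
  obtain ⟨s, hs, hcard⟩ := exists_isIndepSet'_ncard_eq_ncard_isMaximalCyclic (G := G)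
  refine IsGreatest.csSup_eq ⟨⟨s, hs, hcard⟩, ?_⟩
  rintro _ ⟨t, ht, rfl⟩
  exact ncard_le_ncard_isMaximalCyclic_of_isIndepSet' ht
end

section
/- Let p be a prime and G a finite p-group. If p > 2, then the matching number of the enhanced power graph of G equals (|G| − 1)/2. If p = 2, then the matching number equals (|G| − (t − 1))/2, where t is the number of involutions in G. -/
/-! Pairing each `x` with `x⁻¹` matches every element with `x⁻¹ ≠ x`, that is, all but `1` and the
`t` involutions; if `t ≥ 1`, the edge `{1, u}` for an involution `u` can be added.
Conversely, in a `2`-group every nontrivial cyclic subgroup `⟨x⟩` contains exactly one involution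
`ι x = x ^ (orderOf x / 2)`, so adjacent non-identity vertices have the same `ι`. The fibres of
`ι` (where `ι 1 = 1`) are inverse-closed with a single self-inverse element, hence of odd size, so
a matching avoiding `1` misses a vertex in each of the `t + 1` fibres. In odd order the bound is
just `2 |M| < |G|`. -/

section Matching

variable {V : Type*} {g : SimpleGraph V} {M N : Set (Sym2 V)}

def coveredVerts (M : Set (Sym2 V)) : Set V := ⋃ e ∈ M, {v | v ∈ e}

@[simp]
lemma mem_coveredVerts {v : V} : v ∈ coveredVerts M ↔ ∃ e ∈ M, v ∈ e := by
  simp [coveredVerts]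

lemma IsMatching'.mono (hM : IsMatching' g M) (hNM : N ⊆ M) : IsMatching' g N :=
  ⟨hNM.trans hM.1, hM.2.mono hNM⟩

lemma ncard_setOf_mem_of_not_isDiag {e : Sym2 V} (he : ¬ e.IsDiag) :
    {v | v ∈ e}.ncard = 2 := by
  induction e using Sym2.ind with
  | _ a b =>
    rw [Sym2.mk_isDiag_iff] at he
    rw [← Set.ncard_pair he]
    congr 1
    ext v
    simp [Sym2.mem_iff]

lemma IsMatching'.ncard_coveredVerts [Finite V] (hM : IsMatching' g M) :
    (coveredVerts M).ncard = 2 * M.ncard := by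
  have hdisj : M.PairwiseDisjoint fun e => {v | v ∈ e} :=
    fun e he f hf hef => Set.disjoint_left.mpr (hM.2 he hf hef)
  rw [coveredVerts, M.toFinite.ncard_biUnion (fun _ _ => Set.toFinite _) hdisj, ← finsum_one,
    mul_finsum_mem]
  exact finsum_mem_congr rfl fun e he =>
    ncard_setOf_mem_of_not_isDiag (g.not_isDiag_of_mem_edgeSet (hM.1 he))

lemma IsMatching'.two_mul_ncard_le [Finite V] (hM : IsMatching' g M) :
    2 * M.ncard ≤ Nat.card V :=
  hM.ncard_coveredVerts ▸ Set.ncard_le_card _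

lemma IsMatching'.ncard_le_ncard_sep_notMem_add_one [Finite V] (hM : IsMatching' g M) (v : V) :
    M.ncard ≤ {e ∈ M | v ∉ e}.ncard + 1 := by
  have hle : (M ∩ {e | v ∈ e}).ncard ≤ 1 :=
    (Set.ncard_le_one).mpr fun e he f hf => by_contra fun hef => hM.2 he.1 hf.1 hef v he.2 hf.2
  calc M.ncard = (M ∩ {e | v ∈ e}).ncard + {e ∈ M | v ∉ e}.ncard :=
        (Set.ncard_inter_add_ncard_sdiff_eq_ncard M _).symm
    _ ≤ {e ∈ M | v ∉ e}.ncard + 1 := by omega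

lemma IsMatching'.insert (hM : IsMatching' g M) {a b : V} (hab : g.Adj a b)
    (ha : a ∉ coveredVerts M) (hb : b ∉ coveredVerts M) : IsMatching' g (insert s(a, b) M) := by
  have hdisj : ∀ f ∈ M, ∀ v ∈ s(a, b), v ∉ f := by
    intro f hf v hv hvf
    rcases Sym2.mem_iff.mp hv with rfl | rfl
    exacts [ha (mem_coveredVerts.mpr ⟨f, hf, hvf⟩), hb (mem_coveredVerts.mpr ⟨f, hf, hvf⟩)]
  exact ⟨Set.insert_subset hab hM.1, hM.2.insert fun f hf _ =>
    ⟨hdisj f hf, fun v hvf hv => hdisj f hf v hv hvf⟩⟩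

lemma preimage_singleton_inter_coveredVerts {β : Type*} (f : V → β)
    (hf : ∀ ⦃x y⦄, s(x, y) ∈ M → f x = f y) (b : β) :
    f ⁻¹' {b} ∩ coveredVerts M = coveredVerts {e ∈ M | ∀ v ∈ e, f v = b} := by
  have hconst : ∀ e ∈ M, ∀ v ∈ e, ∀ w ∈ e, f v = f w := by
    intro e he
    induction e using Sym2.ind with
    | _ x y =>
      have := hf he
      simp only [Sym2.mem_iff]
      rintro v (rfl | rfl) w (rfl | rfl) <;> simp [this]
  ext v
  simp only [Set.mem_inter_iff, Set.mem_preimage, Set.mem_singleton_iff, mem_coveredVerts,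
    Set.mem_ofPred_eq]
  constructor
  · rintro ⟨rfl, e, he, hv⟩
    exact ⟨e, ⟨he, fun w hw => hconst e he w hw v hv⟩, hv⟩
  · rintro ⟨e, ⟨he, hb⟩, hv⟩
    exact ⟨hb v hv, e, he, hv⟩

/-- Every odd fibre of `f` contains a vertex left uncovered by `M`. -/
lemma IsMatching'.two_mul_ncard_add_ncard_range_le [Finite V] {β : Type*}
    (hM : IsMatching' g M) (f : V → β) (hf : ∀ ⦃x y⦄, s(x, y) ∈ M → f x = f y)
    (hodd : ∀ b ∈ Set.range f, Odd (f ⁻¹' {b}).ncard) :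
    2 * M.ncard + (Set.range f).ncard ≤ Nat.card V := by
  have hrange : Set.range f ⊆ f '' (coveredVerts M)ᶜ := by
    rintro b hb
    have heven : Even (f ⁻¹' {b} ∩ coveredVerts M).ncard := by
      rw [preimage_singleton_inter_coveredVerts f hf b,
        (hM.mono (Set.sep_subset _ _)).ncard_coveredVerts]
      exact even_two_mul _
    have hlt : (f ⁻¹' {b} ∩ coveredVerts M).ncard < (f ⁻¹' {b}).ncard :=
      (Set.ncard_le_ncard Set.inter_subset_left).lt_of_ne
        fun h => Nat.not_even_iff_odd.mpr (hodd b hb) (h ▸ heven)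
    obtain ⟨v, hvb, hv⟩ := Set.exists_mem_notMem_of_ncard_lt_ncard hlt
    exact ⟨v, fun hvM => hv ⟨hvb, hvM⟩, hvb⟩
  calc 2 * M.ncard + (Set.range f).ncard
      ≤ (coveredVerts M).ncard + (coveredVerts M)ᶜ.ncard := by
        rw [hM.ncard_coveredVerts]
        exact Nat.add_le_add_left ((Set.ncard_le_ncard hrange).trans Set.ncard_image_le) _
    _ = Nat.card V := Set.ncard_add_ncard_compl _

lemma matchingNum_eq_of_forall_le {k : ℕ}
    (hex : ∃ M, IsMatching' g M ∧ M.ncard = k) (hle : ∀ M, IsMatching' g M → M.ncard ≤ k) :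
    matchingNum g = k :=
  IsGreatest.csSup_eq ⟨hex, by rintro _ ⟨M, hM, rfl⟩; exact hle M hM⟩

end Matching

section InvPairs

variable {G : Type*} [Group G] {s : Set G}

lemma enhancedPowerGraph_adj_inv {x : G} (hx : x⁻¹ ≠ x) : (enhancedPowerGraph G).Adj x x⁻¹ :=
  ⟨hx.symm, x, Subgroup.mem_zpowers x, Subgroup.inv_mem _ (Subgroup.mem_zpowers x)⟩

lemma sym2_mk_inv_eq_of_mem {x v : G} (hv : v ∈ s(x, x⁻¹)) : s(x, x⁻¹) = s(v, v⁻¹) := by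
  rcases Sym2.mem_iff.mp hv with rfl | rfl
  · rfl
  · rw [inv_inv, Sym2.eq_swap]

def invPairs (s : Set G) : Set (Sym2 G) := (fun x => s(x, x⁻¹)) '' {x ∈ s | x⁻¹ ≠ x}

lemma isMatching'_invPairs (s : Set G) : IsMatching' (enhancedPowerGraph G) (invPairs s) := by
  constructor
  · rintro _ ⟨x, ⟨-, hx⟩, rfl⟩
    exact enhancedPowerGraph_adj_inv hx
  · rintro _ ⟨x, -, rfl⟩ _ ⟨y, -, rfl⟩ hxy v hvx hvy
    exact hxy ((sym2_mk_inv_eq_of_mem hvx).trans (sym2_mk_inv_eq_of_mem hvy).symm)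

lemma coveredVerts_invPairs (hs : ∀ x ∈ s, x⁻¹ ∈ s) :
    coveredVerts (invPairs s) = {x ∈ s | x⁻¹ ≠ x} := by
  ext v
  simp only [mem_coveredVerts, invPairs, Set.mem_image]
  constructor
  · rintro ⟨_, ⟨x, ⟨hxs, hx⟩, rfl⟩, hv⟩
    rcases Sym2.mem_iff.mp hv with rfl | rfl
    · exact ⟨hxs, hx⟩
    · exact ⟨hs x hxs, by rwa [inv_inv, ne_comm]⟩
  · intro hv
    exact ⟨_, ⟨v, hv, rfl⟩, Sym2.mem_mk_left _ _⟩

lemma ncard_modEq_ncard_inv_eq_self [Finite G] (hs : ∀ x ∈ s, x⁻¹ ∈ s) :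
    s.ncard ≡ {x ∈ s | x⁻¹ = x}.ncard [MOD 2] := by
  have hpairs : {x ∈ s | x⁻¹ ≠ x}.ncard = 2 * (invPairs s).ncard := by
    rw [← coveredVerts_invPairs hs, (isMatching'_invPairs s).ncard_coveredVerts]
  have hsplit : {x ∈ s | x⁻¹ = x}.ncard + {x ∈ s | x⁻¹ ≠ x}.ncard = s.ncard :=
    Set.ncard_inter_add_ncard_sdiff_eq_ncard s {x | x⁻¹ = x}
  unfold Nat.ModEq
  omega

end InvPairs

section ZPowersInvolution

variable {G : Type*} [Group G] {x z : G}

/-- For `x ≠ 1` in a `2`-group, the unique involution of `⟨x⟩`. -/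
noncomputable def zpowersInvolution (x : G) : G := x ^ (orderOf x / 2)

lemma inv_eq_self_iff_eq_one_or_orderOf_eq_two : x⁻¹ = x ↔ x = 1 ∨ orderOf x = 2 := by
  rw [inv_eq_iff_mul_eq_one, ← pow_two, ← orderOf_dvd_iff_pow_eq_one,
    Nat.dvd_prime Nat.prime_two, orderOf_eq_one_iff]

lemma zpowersInvolution_of_inv_eq_self (h : x⁻¹ = x) : zpowersInvolution x = x := by
  rcases inv_eq_self_iff_eq_one_or_orderOf_eq_two.mp h with rfl | h2
  · rw [zpowersInvolution, one_pow]
  · rw [zpowersInvolution, h2, Nat.div_self two_pos, pow_one]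

lemma IsPGroup.orderOf_zpowersInvolution (hG : IsPGroup 2 G) (hx : x ≠ 1) :
    orderOf (zpowersInvolution x) = 2 := by
  obtain ⟨k, hk⟩ := IsPGroup.iff_orderOf.mp hG x
  have hk0 : k ≠ 0 := by
    rintro rfl
    exact hx (orderOf_eq_one_iff.mp hk)
  refine orderOf_pow_orderOf_div (by simp [hk]) ?_
  rw [hk]
  exact dvd_pow_self 2 hk0

lemma IsPGroup.inv_zpowersInvolution (hG : IsPGroup 2 G) :
    (zpowersInvolution x)⁻¹ = zpowersInvolution x := by
  rcases eq_or_ne x 1 with rfl | hx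
  · simp [zpowersInvolution]
  · exact inv_eq_self_of_orderOf_eq_two (hG.orderOf_zpowersInvolution hx)

lemma IsPGroup.zpowersInvolution_inv (hG : IsPGroup 2 G) :
    zpowersInvolution x⁻¹ = zpowersInvolution x := by
  rw [zpowersInvolution, orderOf_inv, inv_pow]
  exact hG.inv_zpowersInvolution

lemma IsPGroup.range_zpowersInvolution (hG : IsPGroup 2 G) :
    Set.range (zpowersInvolution (G := G)) = {x | x⁻¹ = x} := by
  ext x
  constructor
  · rintro ⟨y, rfl⟩
    exact hG.inv_zpowersInvolution
  · intro hx
    exact ⟨x, zpowersInvolution_of_inv_eq_self hx⟩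

lemma eq_of_orderOf_eq_two_of_mem_zpowers [Finite G] {u w : G} (hu : u ∈ Subgroup.zpowers z)
    (hw : w ∈ Subgroup.zpowers z) (hu2 : orderOf u = 2) (hw2 : orderOf w = 2) : u = w := by
  classical
  have := Fintype.ofFinite (Subgroup.zpowers z)
  have hdvd : 2 ∣ Fintype.card (Subgroup.zpowers z) := by
    rw [← hu2, ← Subgroup.orderOf_mk u hu]
    exact orderOf_dvd_card
  have hcard := IsCyclic.card_orderOf_eq_totient hdvd
  rw [Nat.totient_two] at hcard
  have := Finset.card_le_one.mp hcard.le ⟨u, hu⟩ (by simp [Subgroup.orderOf_mk, hu2])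
    ⟨w, hw⟩ (by simp [Subgroup.orderOf_mk, hw2])
  simpa using this

lemma IsPGroup.zpowersInvolution_eq_of_mem_zpowers [Finite G] (hG : IsPGroup 2 G)
    (hx : x ∈ Subgroup.zpowers z) (hx1 : x ≠ 1) : zpowersInvolution x = zpowersInvolution z := by
  have hz1 : z ≠ 1 := by
    rintro rfl
    simp_all
  exact eq_of_orderOf_eq_two_of_mem_zpowers (Subgroup.pow_mem _ hx _)
    (Subgroup.pow_mem _ (Subgroup.mem_zpowers z) _) (hG.orderOf_zpowersInvolution hx1)
    (hG.orderOf_zpowersInvolution hz1)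

end ZPowersInvolution

section EnhancedPowerGraph

variable {G : Type*} [Group G] [Finite G]

lemma ncard_setOf_inv_eq_self :
    {x : G | x⁻¹ = x}.ncard = {x : G | orderOf x = 2}.ncard + 1 := by
  have hset : {x : G | x⁻¹ = x} = insert 1 {x | orderOf x = 2} := by
    ext x
    exact inv_eq_self_iff_eq_one_or_orderOf_eq_two
  rw [hset, Set.ncard_insert_of_notMem (by simp)]

lemma two_mul_ncard_invPairs_univ :
    2 * (invPairs (Set.univ : Set G)).ncard + {x : G | orderOf x = 2}.ncard + 1 = Nat.card G := by
  rw [← (isMatching'_invPairs _).ncard_coveredVerts, coveredVerts_invPairs (by simp),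
    add_assoc, ← ncard_setOf_inv_eq_self, ← Set.ncard_add_ncard_compl {x : G | x⁻¹ = x}, add_comm]
  congr 2
  ext x
  simp

theorem matchingNum_enhancedPowerGraph_of_odd_card (hodd : Odd (Nat.card G)) :
    matchingNum (enhancedPowerGraph G) = (Nat.card G - 1) / 2 := by
  have hinvol : {x : G | orderOf x = 2}.ncard = 0 := by
    refine (Set.ncard_eq_zero).mpr (Set.eq_empty_of_forall_notMem fun x hx => ?_)
    have h2 : 2 ∣ Nat.card G := hx ▸ orderOf_dvd_natCard x
    exact Nat.not_even_iff_odd.mpr hodd (even_iff_two_dvd.mpr h2)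
  have hpairs := two_mul_ncard_invPairs_univ (G := G)
  refine matchingNum_eq_of_forall_le ⟨invPairs Set.univ, isMatching'_invPairs _, by omega⟩
    fun M hM => ?_
  have := hM.two_mul_ncard_le
  obtain ⟨k, hk⟩ := hodd
  omega

lemma exists_isMatching'_two_mul_ncard_add_ncard_eq {u : G} (hu : orderOf u = 2) :
    ∃ M, IsMatching' (enhancedPowerGraph G) M ∧
      2 * M.ncard + {x : G | orderOf x = 2}.ncard = Nat.card G + 1 := by
  have hnot : ∀ x : G, x⁻¹ = x → x ∉ coveredVerts (invPairs Set.univ) := by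
    intro x hx
    rw [coveredVerts_invPairs fun _ _ => Set.mem_univ _]
    exact fun h => h.2 hx
  have h1u : (1 : G) ≠ u := by
    rintro rfl
    simp at hu
  have h1 : (1 : G) ∉ coveredVerts (invPairs Set.univ) := hnot 1 inv_one
  refine ⟨insert s(1, u) (invPairs Set.univ), (isMatching'_invPairs _).insert
    ⟨h1u, u, Subgroup.one_mem _, Subgroup.mem_zpowers u⟩ h1
    (hnot u (inv_eq_self_of_orderOf_eq_two hu)), ?_⟩
  rw [Set.ncard_insert_of_notMem fun h => h1 (mem_coveredVerts.mpr ⟨_, h, Sym2.mem_mk_left _ _⟩)]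
  have := two_mul_ncard_invPairs_univ (G := G)
  omega

lemma IsPGroup.zpowersInvolution_eq_of_adj (hG : IsPGroup 2 G) {x y : G}
    (hadj : (enhancedPowerGraph G).Adj x y) (hx : x ≠ 1) (hy : y ≠ 1) :
    zpowersInvolution x = zpowersInvolution y := by
  obtain ⟨-, z, hxz, hyz⟩ := hadj
  rw [hG.zpowersInvolution_eq_of_mem_zpowers hxz hx, hG.zpowersInvolution_eq_of_mem_zpowers hyz hy]

lemma IsPGroup.odd_ncard_preimage_zpowersInvolution (hG : IsPGroup 2 G) {b : G}
    (hb : b ∈ Set.range zpowersInvolution) : Odd (zpowersInvolution ⁻¹' {b}).ncard := by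
  have hb' : b⁻¹ = b := by rwa [hG.range_zpowersInvolution] at hb
  have hinv : ∀ x ∈ zpowersInvolution ⁻¹' {b}, x⁻¹ ∈ zpowersInvolution ⁻¹' {b} := by
    intro x hx
    simpa [hG.zpowersInvolution_inv] using hx
  have hfix : {x ∈ zpowersInvolution ⁻¹' {b} | x⁻¹ = x} = {b} := by
    ext x
    simp only [Set.mem_preimage, Set.mem_singleton_iff, Set.mem_ofPred_eq]
    constructor
    · rintro ⟨hxb, hx⟩
      rw [← hxb, zpowersInvolution_of_inv_eq_self hx]
    · rintro rfl
      exact ⟨zpowersInvolution_of_inv_eq_self hb', hb'⟩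
  have hmod := ncard_modEq_ncard_inv_eq_self hinv
  rw [hfix, Set.ncard_singleton] at hmod
  exact Nat.odd_iff.mpr hmod

lemma IsPGroup.two_mul_ncard_add_ncard_le (hG : IsPGroup 2 G) {M : Set (Sym2 G)}
    (hM : IsMatching' (enhancedPowerGraph G) M) :
    2 * M.ncard + {x : G | orderOf x = 2}.ncard ≤ Nat.card G + 1 := by
  have hf : ∀ ⦃x y : G⦄, s(x, y) ∈ {e ∈ M | (1 : G) ∉ e} →
      zpowersInvolution x = zpowersInvolution y := by
    rintro x y ⟨hxy, h1⟩
    exact hG.zpowersInvolution_eq_of_adj (hM.1 hxy) (by rintro rfl; simp at h1)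
      (by rintro rfl; simp at h1)
  have hbound := (hM.mono (Set.sep_subset _ _)).two_mul_ncard_add_ncard_range_le _ hf
    fun _ hb => hG.odd_ncard_preimage_zpowersInvolution hb
  rw [hG.range_zpowersInvolution, ncard_setOf_inv_eq_self] at hbound
  have := hM.ncard_le_ncard_sep_notMem_add_one 1
  omega

theorem IsPGroup.matchingNum_enhancedPowerGraph (hG : IsPGroup 2 G) :
    matchingNum (enhancedPowerGraph G) =
      (Nat.card G - ({x : G | orderOf x = 2}.ncard - 1)) / 2 := by
  rcases eq_or_ne {x : G | orderOf x = 2}.ncard 0 with h0 | h0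
  · have hodd : Odd (Nat.card G) := by
      by_contra heven
      obtain ⟨u, hu⟩ := exists_prime_orderOf_dvd_card' 2
        (even_iff_two_dvd.mp (Nat.not_odd_iff_even.mp heven))
      exact h0.not_gt ((Set.ncard_pos).mpr ⟨u, hu⟩)
    rw [matchingNum_enhancedPowerGraph_of_odd_card hodd, h0]
    obtain ⟨k, hk⟩ := hodd
    omega
  · obtain ⟨u, hu⟩ := Set.nonempty_of_ncard_ne_zero h0
    obtain ⟨M, hM, hcard⟩ := exists_isMatching'_two_mul_ncard_add_ncard_eq hu
    refine matchingNum_eq_of_forall_le ⟨M, hM, by omega⟩ fun M' hM' => ?_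
    have := hG.two_mul_ncard_add_ncard_le hM'
    omega

end EnhancedPowerGraph

/-- Let `p` be a prime and `G` a finite `p`-group. If `p > 2` the matching
number of the enhanced power graph of `G` is `(|G| − 1)/2`; if `p = 2` it is
`(|G| − (t − 1))/2`, where `t` is the number of involutions of `G`. -/
theorem stmt_9 {G : Type*} [Group G] [Fintype G] {p : ℕ} (hp : p.Prime)
    (hG : IsPGroup p G) (t : ℕ) (ht : t = {x : G | orderOf x = 2}.ncard) :
    (2 < p → matchingNum (enhancedPowerGraph G) = (Fintype.card G - 1) / 2) ∧
    (p = 2 → matchingNum (enhancedPowerGraph G) = (Fintype.card G - (t - 1)) / 2) := by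
  rw [← Nat.card_eq_fintype_card]
  refine ⟨fun hp2 => ?_, ?_⟩
  · have := Fact.mk hp
    obtain ⟨n, hn⟩ := IsPGroup.iff_card.mp hG
    exact matchingNum_enhancedPowerGraph_of_odd_card (hn ▸ (hp.odd_of_ne_two hp2.ne').pow)
  · rintro rfl
    exact ht ▸ hG.matchingNum_enhancedPowerGraph
end

section
/- Let n ≥ 1 and write n = 3^k · t with k ≥ 0 and 3 ∤ t. In U_{6n} = ⟨a, b : a^{2n} = b^3 = e, ba = ab^{-1}⟩, set P_i = ⟨a^{2·3^i} b⟩ for 0 ≤ i ≤ k and P_{k+1} = ⟨ab⟩. For 0 ≤ i ≤ k+1 and any x ∈ P_i \ ⟨a⟩, a vertex y ∈ U_{6n} is adjacent to x in the enhanced power graph of U_{6n} if and only if y ∈ P_i (and y ≠ x). -/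
/-!
Every element of `U_{6n}` is `a^p b^v` for a unique `p` mod `2n` and `v` mod `3`, since the map
`(p, v) ↦ a^p b^v` is onto a group of order `6n`. Elements with `p` even commute past `b`, so
their powers are computed coordinatewise; an element with `p` odd squares into `⟨a⟩`, so its
powers lie in `⟨a⟩` or keep its `b`-part. Hence if `x ∈ P_i \ ⟨a⟩` is a power `z^e`, the parity
of the `a`-exponent of `z` is forced. For `P_{k+1}` this already gives `z = (ab)^p`; for
`P_i = ⟨a^{2·3^i} b⟩` with `i ≤ k` the exponent of `z` in `P_i` is found by the Chinese remainder
theorem modulo `3^{k+1}` (where `e` is a unit) and `t` (where `3^i` is a unit).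
-/
theorem IsCoprime.exists_mul_intModEq_one {a m : ℤ} (h : IsCoprime a m) :
    ∃ a', a' * a ≡ 1 [ZMOD m] := by
  obtain ⟨x, y, hxy⟩ := h
  exact ⟨x, Int.modEq_iff_dvd.2 ⟨y, by linarith⟩⟩

theorem Int.exists_modEq_and_modEq {m n : ℤ} (h : IsCoprime m n) (a b : ℤ) :
    ∃ w, w ≡ a [ZMOD m] ∧ w ≡ b [ZMOD n] := by
  obtain ⟨x, y, hxy⟩ := h
  refine ⟨a * (y * n) + b * (x * m), Int.modEq_iff_dvd.2 ⟨a * x - b * x, ?_⟩,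
    Int.modEq_iff_dvd.2 ⟨b * y - a * y, ?_⟩⟩
  · linear_combination -a * hxy
  · linear_combination -b * hxy

theorem Int.exists_modEq_of_mul_modEq (k : ℕ) {t c m u v e : ℤ} (ht : ¬ 3 ∣ t) (hc : IsCoprime c t)
    (hm : ¬ 3 ∣ m) (hcm : c * m ≡ u * e [ZMOD 3 ^ k * t]) (hm3 : m ≡ v * e [ZMOD 3]) :
    ∃ w, c * w ≡ u [ZMOD 3 ^ k * t] ∧ w ≡ v [ZMOD 3] := by
  have he : ¬ 3 ∣ e := fun he => hm ((hm3.dvd_iff).2 (he.mul_left v))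
  have hcop3 : ∀ {x : ℤ}, ¬ 3 ∣ x → ∀ j : ℕ, IsCoprime x (3 ^ j) := fun hx j =>
    ((Int.prime_three.coprime_iff_not_dvd).2 hx).symm.pow_right
  obtain ⟨e', he'⟩ := (hcop3 he (k + 1)).exists_mul_intModEq_one
  obtain ⟨c', hc'⟩ := hc.exists_mul_intModEq_one
  obtain ⟨w, hw3, hwt⟩ := Int.exists_modEq_and_modEq (hcop3 ht (k + 1)).symm (e' * m) (c' * u)
  refine ⟨w, ?_, ?_⟩
  · refine Int.modEq_iff_dvd.2 ((hcop3 ht k).symm.mul_dvd ?_ ?_) <;> rw [← Int.modEq_iff_dvd]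
    · have he'k := he'.of_dvd (pow_dvd_pow 3 k.le_succ)
      calc c * w ≡ e' * (c * m) [ZMOD 3 ^ k] := by
            rw [mul_left_comm]; exact (hw3.of_dvd (pow_dvd_pow 3 k.le_succ)).mul_left c
        _ ≡ e' * (u * e) [ZMOD 3 ^ k] := (hcm.of_mul_right t).mul_left e'
        _ = u * (e' * e) := by ring
        _ ≡ u * 1 [ZMOD 3 ^ k] := he'k.mul_left u
        _ = u := mul_one u
    · calc c * w ≡ c * (c' * u) [ZMOD t] := hwt.mul_left c
        _ = u * (c' * c) := by ring
        _ ≡ u * 1 [ZMOD t] := hc'.mul_left u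
        _ = u := mul_one u
  · calc w ≡ e' * m [ZMOD 3] := hw3.of_dvd (dvd_pow_self 3 k.succ_ne_zero)
      _ ≡ e' * (v * e) [ZMOD 3] := hm3.mul_left e'
      _ = v * (e' * e) := by ring
      _ ≡ v * 1 [ZMOD 3] := (he'.of_dvd (dvd_pow_self 3 k.succ_ne_zero)).mul_left v
      _ = v := mul_one v

namespace U6n

variable {G : Type*} [Group G] {a b : G}

theorem zpow_mul_eq_mul_zpow_neg (hba : b * a = a * b⁻¹) (v : ℤ) :
    b ^ v * a = a * b ^ (-v) := by
  rw [zpow_neg, ← inv_zpow]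
  exact ((SemiconjBy.zpow_right hba.symm v).eq).symm

theorem commute_zpow_of_even (hba : b * a = a * b⁻¹) {p : ℤ} (hp : Even p) (v : ℤ) :
    Commute (a ^ p) (b ^ v) := by
  have h : SemiconjBy a b⁻¹ b := hba.symm
  have hsq : Commute (a * a) b := by
    have := h.mul_left h.inv_right
    rwa [inv_inv] at this
  obtain ⟨r, rfl⟩ := hp
  rw [← two_mul, zpow_mul, zpow_two]
  exact (hsq.zpow_left r).zpow_right v

theorem zpow_mul_zpow_of_odd (hba : b * a = a * b⁻¹) {p : ℤ} (hp : Odd p) (v : ℤ) :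
    b ^ v * a ^ p = a ^ p * b ^ (-v) := by
  obtain ⟨r, rfl⟩ := hp
  rw [zpow_add_one, ← mul_assoc, ← (commute_zpow_of_even hba (even_two_mul r) v).eq, mul_assoc,
    zpow_mul_eq_mul_zpow_neg hba, mul_assoc]

theorem exists_zpow_mul_zpow_eq (hba : b * a = a * b⁻¹) (p v : ℤ) :
    ∃ w : ℤ, b ^ v * a ^ p = a ^ p * b ^ w := by
  rcases Int.even_or_odd p with hp | hp
  · exact ⟨v, (commute_zpow_of_even hba hp v).eq.symm⟩
  · exact ⟨-v, zpow_mul_zpow_of_odd hba hp v⟩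

theorem mul_zpow_of_even (hba : b * a = a * b⁻¹) {p : ℤ} (hp : Even p) (v e : ℤ) :
    (a ^ p * b ^ v) ^ e = a ^ (p * e) * b ^ (v * e) := by
  rw [(commute_zpow_of_even hba hp v).mul_zpow, zpow_mul, zpow_mul]

theorem mul_self_of_odd (hba : b * a = a * b⁻¹) {p : ℤ} (hp : Odd p) (v : ℤ) :
    (a ^ p * b ^ v) * (a ^ p * b ^ v) = a ^ (2 * p) := by
  rw [mul_assoc, ← mul_assoc (b ^ v), zpow_mul_zpow_of_odd hba hp, mul_assoc, zpow_neg,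
    inv_mul_cancel, mul_one, ← zpow_add, two_mul]

theorem mul_zpow_of_odd_of_even (hba : b * a = a * b⁻¹) {p e : ℤ} (hp : Odd p) (he : Even e)
    (v : ℤ) : (a ^ p * b ^ v) ^ e = a ^ (p * e) := by
  obtain ⟨r, rfl⟩ := he
  rw [← two_mul, zpow_mul, zpow_two, mul_self_of_odd hba hp, ← zpow_mul, mul_assoc, mul_left_comm]

theorem mul_zpow_of_odd_of_odd (hba : b * a = a * b⁻¹) {p e : ℤ} (hp : Odd p) (he : Odd e)
    (v : ℤ) : (a ^ p * b ^ v) ^ e = a ^ (p * e) * b ^ v := by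
  obtain ⟨r, rfl⟩ := he
  rw [zpow_add_one, mul_zpow_of_odd_of_even hba hp (even_two_mul r), ← mul_assoc, ← zpow_add,
    mul_add_one]

theorem exists_eq_zpow_mul_zpow (hba : b * a = a * b⁻¹) (hgen : Subgroup.closure {a, b} = ⊤)
    (g : G) : ∃ p v : ℤ, g = a ^ p * b ^ v := by
  induction hgen ▸ Subgroup.mem_top g using Subgroup.closure_induction with
  | mem x hx =>
    rcases hx with rfl | rfl
    · exact ⟨1, 0, by simp⟩
    · exact ⟨0, 1, by simp⟩
  | one => exact ⟨0, 0, by simp⟩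
  | mul x y _ _ hx hy =>
    obtain ⟨p, v, rfl⟩ := hx
    obtain ⟨q, w, rfl⟩ := hy
    obtain ⟨v', hv'⟩ := exists_zpow_mul_zpow_eq hba q v
    exact ⟨p + q, v' + w, by rw [mul_assoc, ← mul_assoc (b ^ v), hv', zpow_add, zpow_add]; group⟩
  | inv x _ hx =>
    obtain ⟨p, v, rfl⟩ := hx
    obtain ⟨v', hv'⟩ := exists_zpow_mul_zpow_eq hba (-p) (-v)
    exact ⟨-p, v', by rw [mul_inv_rev, ← zpow_neg, ← zpow_neg, hv']⟩

end U6n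

/-- `G` is `U_{6n}` with standard generators `a`, `b`: instead of the presentation we ask for the
relations, generation, and `|G| = 6n`. -/
structure IsU6nGenerators {G : Type*} [Group G] [Fintype G] (n : ℕ) (a b : G) : Prop where
  a_pow_eq_one : a ^ (2 * n) = 1
  b_pow_eq_one : b ^ 3 = 1
  conj : b * a = a * b⁻¹
  card_eq : Fintype.card G = 6 * n
  closure_eq : Subgroup.closure {a, b} = ⊤

namespace IsU6nGenerators

open U6n

variable {G : Type*} [Group G] [Fintype G] {n : ℕ} {a b : G}

theorem zpow_mul_zpow_eq_iff (h : IsU6nGenerators n a b) {p v q w : ℤ} :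
    a ^ p * b ^ v = a ^ q * b ^ w ↔ 2 * (n : ℤ) ∣ p - q ∧ 3 ∣ v - w := by
  have : NeZero (2 * n) := ⟨by have := h.card_eq ▸ Fintype.card_pos (α := G); omega⟩
  let f : ZMod (2 * n) × ZMod 3 → G := fun x => a ^ x.1.val * b ^ x.2.val
  have hf : ∀ p v : ℤ, f (p, v) = a ^ p * b ^ v := fun p v => by
    simp only [f, ← zpow_natCast, ZMod.val_intCast]
    rw [← zpow_eq_zpow_emod' p h.a_pow_eq_one, ← zpow_eq_zpow_emod' v h.b_pow_eq_one]
  have hsurj : Function.Surjective f := fun g => by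
    obtain ⟨p, v, rfl⟩ := exists_eq_zpow_mul_zpow h.conj h.closure_eq g
    exact ⟨(p, v), hf p v⟩
  have hbij : Function.Bijective f := (Fintype.bijective_iff_surjective_and_card f).2
    ⟨hsurj, by rw [h.card_eq, Fintype.card_prod, ZMod.card, ZMod.card]; ring⟩
  rw [← hf, ← hf, hbij.injective.eq_iff, Prod.mk.injEq, ZMod.intCast_eq_intCast_iff_dvd_sub,
    ZMod.intCast_eq_intCast_iff_dvd_sub, dvd_sub_comm, dvd_sub_comm (a := ((3 : ℕ) : ℤ))]
  norm_cast

theorem even_iff_even_of_eq (h : IsU6nGenerators n a b) {p v q w : ℤ}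
    (heq : a ^ p * b ^ v = a ^ q * b ^ w) : Even p ↔ Even q :=
  Int.even_sub.1 (even_iff_two_dvd.2 ((dvd_mul_right 2 _).trans (h.zpow_mul_zpow_eq_iff.1 heq).1))

theorem even_of_zpow_eq (h : IsU6nGenerators n a b) {p v e q w : ℤ}
    (heq : (a ^ p * b ^ v) ^ e = a ^ q * b ^ w) (hq : Even q) (hw : ¬ 3 ∣ w) : Even p := by
  by_contra hp
  rw [Int.not_even_iff_odd] at hp
  rcases Int.even_or_odd e with he | he
  · rw [mul_zpow_of_odd_of_even h.conj hp he, ← mul_one (a ^ (p * e)), ← zpow_zero b,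
      h.zpow_mul_zpow_eq_iff] at heq
    exact hw (by simpa using heq.2)
  · rw [mul_zpow_of_odd_of_odd h.conj hp he] at heq
    exact Int.not_even_iff_odd.2 (hp.mul he) ((h.even_iff_even_of_eq heq).2 hq)

theorem odd_of_zpow_eq (h : IsU6nGenerators n a b) {p v e q w : ℤ}
    (heq : (a ^ p * b ^ v) ^ e = a ^ q * b ^ w) (hq : Odd q) : Odd p ∧ Odd e := by
  rw [← Int.not_even_iff_odd] at hq
  rcases Int.even_or_odd p with hp | hp
  · rw [mul_zpow_of_even h.conj hp] at heq
    exact (hq ((h.even_iff_even_of_eq heq).1 (hp.mul_right e))).elim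
  rcases Int.even_or_odd e with he | he
  · rw [mul_zpow_of_odd_of_even h.conj hp he, ← mul_one (a ^ (p * e)), ← zpow_zero b] at heq
    exact (hq ((h.even_iff_even_of_eq heq).1 (he.mul_left p))).elim
  · exact ⟨hp, he⟩

theorem mem_zpowers_mul_of_mem_zpowers (h : IsU6nGenerators n a b) {x z : G}
    (hx : x ∈ Subgroup.zpowers (a * b)) (hxa : x ∉ Subgroup.zpowers a)
    (hxz : x ∈ Subgroup.zpowers z) : z ∈ Subgroup.zpowers (a * b) := by
  have hab : ∀ m : ℤ, (a * b) ^ m = (a ^ (1 : ℤ) * b ^ (1 : ℤ)) ^ m := by simp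
  obtain ⟨m, rfl⟩ := Subgroup.mem_zpowers_iff.1 hx
  have hm : Odd m := by
    refine Int.not_even_iff_odd.1 fun hm => hxa ?_
    rw [hab, mul_zpow_of_odd_of_even h.conj odd_one hm]
    exact Subgroup.zpow_mem_zpowers a _
  obtain ⟨e, hze⟩ := Subgroup.mem_zpowers_iff.1 hxz
  obtain ⟨p, v, rfl⟩ := exists_eq_zpow_mul_zpow h.conj h.closure_eq z
  rw [hab, mul_zpow_of_odd_of_odd h.conj odd_one hm, one_mul] at hze
  obtain ⟨hp, he⟩ := h.odd_of_zpow_eq hze hm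
  rw [mul_zpow_of_odd_of_odd h.conj hp he, h.zpow_mul_zpow_eq_iff] at hze
  refine Subgroup.mem_zpowers_iff.2 ⟨p, ?_⟩
  rw [hab, mul_zpow_of_odd_of_odd h.conj odd_one hp, one_mul, h.zpow_mul_zpow_eq_iff]
  exact ⟨by simp, dvd_sub_comm.1 hze.2⟩

theorem mem_zpowers_pow_mul_of_mem_zpowers (h : IsU6nGenerators n a b) {k t c : ℕ}
    (hn : n = 3 ^ k * t) (ht : ¬ 3 ∣ t) (hc : c.Coprime t) {x z : G}
    (hx : x ∈ Subgroup.zpowers (a ^ (2 * c) * b)) (hxa : x ∉ Subgroup.zpowers a)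
    (hxz : x ∈ Subgroup.zpowers z) : z ∈ Subgroup.zpowers (a ^ (2 * c) * b) := by
  have hg : ∀ m : ℤ, (a ^ (2 * c) * b) ^ m = a ^ (2 * (c : ℤ) * m) * b ^ m := fun m => by
    have := mul_zpow_of_even h.conj (even_two_mul (c : ℤ)) 1 m
    rw [zpow_one, one_mul] at this
    exact_mod_cast this
  have hn' : 2 * (n : ℤ) = 2 * (3 ^ k * t) := by rw [hn]; norm_cast
  obtain ⟨m, rfl⟩ := Subgroup.mem_zpowers_iff.1 hx
  obtain ⟨e, hze⟩ := Subgroup.mem_zpowers_iff.1 hxz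
  obtain ⟨p, v, rfl⟩ := exists_eq_zpow_mul_zpow h.conj h.closure_eq z
  rw [hg] at hze hxa
  have hm : ¬ 3 ∣ m := fun ⟨d, hd⟩ => hxa <| by
    rw [hd, zpow_mul b, zpow_ofNat, h.b_pow_eq_one, one_zpow, mul_one]
    exact Subgroup.zpow_mem_zpowers a _
  obtain ⟨r, rfl⟩ := h.even_of_zpow_eq hze ((even_two_mul (c : ℤ)).mul_right m) hm
  rw [mul_zpow_of_even h.conj ⟨r, rfl⟩, h.zpow_mul_zpow_eq_iff, hn'] at hze
  have hcm : (c : ℤ) * m ≡ r * e [ZMOD 3 ^ k * t] := by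
    have hd := hze.1
    rw [show (r + r) * e - 2 * c * m = 2 * (r * e - c * m) by ring] at hd
    exact Int.modEq_iff_dvd.2 ((mul_dvd_mul_iff_left two_ne_zero).1 hd)
  obtain ⟨w, hw, hw3⟩ := Int.exists_modEq_of_mul_modEq k (by exact_mod_cast ht)
    (Nat.isCoprime_iff_coprime.2 hc) hm hcm (Int.modEq_iff_dvd.2 hze.2)
  refine Subgroup.mem_zpowers_iff.2 ⟨w, ?_⟩
  rw [hg, h.zpow_mul_zpow_eq_iff, hn']
  refine ⟨?_, dvd_sub_comm.1 (Int.modEq_iff_dvd.1 hw3)⟩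
  rw [show 2 * (c : ℤ) * w - (r + r) = 2 * (c * w - r) by ring]
  exact mul_dvd_mul_left 2 (dvd_sub_comm.1 (Int.modEq_iff_dvd.1 hw))

end IsU6nGenerators

theorem stmt_12_general {G : Type*} [Group G] [Fintype G] (n k t : ℕ)
    (hnkt : n = 3 ^ k * t) (h3t : ¬ 3 ∣ t)
    (a b : G) (ha : a ^ (2 * n) = 1) (hb : b ^ 3 = 1) (hba : b * a = a * b⁻¹)
    (hcard : Fintype.card G = 6 * n) (hgen : Subgroup.closure {a, b} = ⊤)
    (P : ℕ → Subgroup G)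
    (hP : ∀ i ≤ k, P i = Subgroup.zpowers (a ^ (2 * 3 ^ i) * b))
    (hPk1 : P (k + 1) = Subgroup.zpowers (a * b)) :
    ∀ i ≤ k + 1, ∀ x ∈ P i, x ∉ Subgroup.zpowers a →
      ∀ y : G, (enhancedPowerGraph G).Adj x y ↔ (y ∈ P i ∧ y ≠ x) := by
  have hU : IsU6nGenerators n a b := ⟨ha, hb, hba, hcard, hgen⟩
  intro i hi x hxP hxa y
  obtain ⟨g, hg, hmem⟩ :
      ∃ g, P i = Subgroup.zpowers g ∧ ∀ z, x ∈ Subgroup.zpowers z → z ∈ P i := by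
    rcases (show i = k + 1 ∨ i ≤ k by omega) with rfl | hik
    · rw [hPk1] at hxP ⊢
      exact ⟨a * b, rfl, fun z => hU.mem_zpowers_mul_of_mem_zpowers hxP hxa⟩
    · rw [hP i hik] at hxP ⊢
      have h3t' : Nat.Coprime (3 ^ i) t :=
        ((Nat.Prime.coprime_iff_not_dvd Nat.prime_three).2 h3t).pow_left i
      exact ⟨_, rfl, fun z => hU.mem_zpowers_pow_mul_of_mem_zpowers hnkt h3t h3t' hxP hxa⟩
  constructor
  · rintro ⟨hne, z, hxz, hyz⟩
    exact ⟨Subgroup.zpowers_le.2 (hmem z hxz) hyz, Ne.symm hne⟩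
  · rintro ⟨hy, hne⟩
    exact ⟨Ne.symm hne, g, hg ▸ hxP, hg ▸ hy⟩

/-- In `U_{6n}`, with `P_i = ⟨a^{2·3^i}b⟩` for `0 ≤ i ≤ k` and
`P_{k+1} = ⟨ab⟩`: for `0 ≤ i ≤ k+1` and `x ∈ P_i \ ⟨a⟩`, a vertex `y` is adjacent to `x`
in the enhanced power graph if and only if `y ∈ P_i` and `y ≠ x`. -/
theorem stmt_12 {G : Type*} [Group G] [Fintype G] (n k t : ℕ) (hn : 1 ≤ n)
    (hnkt : n = 3 ^ k * t) (h3t : ¬ 3 ∣ t)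
    (a b : G) (ha : a ^ (2 * n) = 1) (hb : b ^ 3 = 1) (hba : b * a = a * b⁻¹)
    (hcard : Fintype.card G = 6 * n) (hgen : Subgroup.closure {a, b} = ⊤)
    (P : ℕ → Subgroup G)
    (hP : ∀ i ≤ k, P i = Subgroup.zpowers (a ^ (2 * 3 ^ i) * b))
    (hPk1 : P (k + 1) = Subgroup.zpowers (a * b)) :
    ∀ i ≤ k + 1, ∀ x ∈ P i, x ∉ Subgroup.zpowers a →
      ∀ y : G, (enhancedPowerGraph G).Adj x y ↔ (y ∈ P i ∧ y ≠ x) :=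
  stmt_12_general n k t hnkt h3t a b ha hb hba hcard hgen P hP hPk1
end
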